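/- Let C be an abelian category and A the heart category of complexes [A \to B \to C] with first map injective and exact in the middle (morphisms modulo homotopy). For every object V = [A \to B \to C] of A there is an exact sequence 0 \to P_A \to P_B \to P_C \to V \to 0 in A, where P_X = [0 \to 0 \to X]. Consequently every object of A has projective dimension at most 2. -/

import Mathlib

open CategoryTheory Limits

namespace ARHeart

variable (C : Type*) [Category C] [Abelian C]

/-- Objects of the heart `𝒜`: complexes `[A ⟶ B ⟶ Z]` in degrees `-2, -1, 0`
with the first map a monomorphism and `Ker g = Im f`. -/
structure Obj : Type _ where
  A : C
  B : C
  Z : C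
  f : A ⟶ B
  g : B ⟶ Z
  w : f ≫ g = 0
  mono : Mono f
  exact : (ShortComplex.mk f g w).Exact

variable {C}

/-- Chain maps between heart objects. -/
@[ext]
structure Hom (V W : Obj C) where
  a : V.A ⟶ W.A
  b : V.B ⟶ W.B
  c : V.Z ⟶ W.Z
  comm₁ : V.f ≫ b = a ≫ W.f
  comm₂ : V.g ≫ c = b ≫ W.g

namespace Hom

variable {U V W : Obj C}

instance : Zero (Hom V W) := ⟨⟨0, 0, 0, by simp, by simp⟩⟩
instance : Add (Hom V W) :=
  ⟨fun φ ψ => ⟨φ.a + ψ.a, φ.b + ψ.b, φ.c + ψ.c,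
    by simp [Preadditive.comp_add, Preadditive.add_comp, φ.comm₁, ψ.comm₁],
    by simp [Preadditive.comp_add, Preadditive.add_comp, φ.comm₂, ψ.comm₂]⟩⟩
instance : Neg (Hom V W) :=
  ⟨fun φ => ⟨-φ.a, -φ.b, -φ.c,
    by simp [φ.comm₁], by simp [φ.comm₂]⟩⟩
instance : Sub (Hom V W) :=
  ⟨fun φ ψ => ⟨φ.a - ψ.a, φ.b - ψ.b, φ.c - ψ.c,
    by simp [Preadditive.comp_sub, Preadditive.sub_comp, φ.comm₁, ψ.comm₁],
    by simp [Preadditive.comp_sub, Preadditive.sub_comp, φ.comm₂, ψ.comm₂]⟩⟩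
instance : SMul ℕ (Hom V W) :=
  ⟨fun n φ => ⟨n • φ.a, n • φ.b, n • φ.c,
    by simp [φ.comm₁], by simp [φ.comm₂]⟩⟩
instance : SMul ℤ (Hom V W) :=
  ⟨fun n φ => ⟨n • φ.a, n • φ.b, n • φ.c,
    by simp [φ.comm₁], by simp [φ.comm₂]⟩⟩

@[simp] lemma add_a (φ ψ : Hom V W) : (φ + ψ).a = φ.a + ψ.a := rfl
@[simp] lemma add_b (φ ψ : Hom V W) : (φ + ψ).b = φ.b + ψ.b := rfl
@[simp] lemma add_c (φ ψ : Hom V W) : (φ + ψ).c = φ.c + ψ.c := rfl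
@[simp] lemma sub_a (φ ψ : Hom V W) : (φ - ψ).a = φ.a - ψ.a := rfl
@[simp] lemma sub_b (φ ψ : Hom V W) : (φ - ψ).b = φ.b - ψ.b := rfl
@[simp] lemma sub_c (φ ψ : Hom V W) : (φ - ψ).c = φ.c - ψ.c := rfl
@[simp] lemma neg_a (φ : Hom V W) : (-φ).a = -φ.a := rfl
@[simp] lemma neg_b (φ : Hom V W) : (-φ).b = -φ.b := rfl
@[simp] lemma neg_c (φ : Hom V W) : (-φ).c = -φ.c := rfl
@[simp] lemma zero_a : (0 : Hom V W).a = 0 := rfl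
@[simp] lemma zero_b : (0 : Hom V W).b = 0 := rfl
@[simp] lemma zero_c : (0 : Hom V W).c = 0 := rfl

instance : AddCommGroup (Hom V W) :=
  Function.Injective.addCommGroup
    (fun φ => (φ.a, φ.b, φ.c))
    (fun φ ψ h => by
      ext <;> simp only [Prod.mk.injEq] at h <;> tauto)
    rfl (fun _ _ => rfl) (fun _ => rfl) (fun _ _ => rfl) (fun _ _ => rfl) (fun _ _ => rfl)

/-- Identity chain map. -/
def id (V : Obj C) : Hom V V := ⟨𝟙 _, 𝟙 _, 𝟙 _, by simp, by simp⟩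

/-- Composition of chain maps. -/
def comp (φ : Hom U V) (ψ : Hom V W) : Hom U W :=
  ⟨φ.a ≫ ψ.a, φ.b ≫ ψ.b, φ.c ≫ ψ.c,
    by rw [← Category.assoc, φ.comm₁, Category.assoc, ψ.comm₁, Category.assoc],
    by rw [← Category.assoc, φ.comm₂, Category.assoc, ψ.comm₂, Category.assoc]⟩

@[simp] lemma comp_a (φ : Hom U V) (ψ : Hom V W) : (φ.comp ψ).a = φ.a ≫ ψ.a := rfl
@[simp] lemma comp_b (φ : Hom U V) (ψ : Hom V W) : (φ.comp ψ).b = φ.b ≫ ψ.b := rfl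
@[simp] lemma comp_c (φ : Hom U V) (ψ : Hom V W) : (φ.comp ψ).c = φ.c ≫ ψ.c := rfl

lemma sub_comp (φ φ' : Hom U V) (ψ : Hom V W) :
    (φ - φ').comp ψ = φ.comp ψ - φ'.comp ψ := by
  ext <;> simp [Preadditive.sub_comp]

lemma comp_sub (φ : Hom U V) (ψ ψ' : Hom V W) :
    φ.comp (ψ - ψ') = φ.comp ψ - φ.comp ψ' := by
  ext <;> simp [Preadditive.comp_sub]

lemma add_comp (φ φ' : Hom U V) (ψ : Hom V W) :
    (φ + φ').comp ψ = φ.comp ψ + φ'.comp ψ := by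
  ext <;> simp [Preadditive.add_comp]

lemma comp_add (φ : Hom U V) (ψ ψ' : Hom V W) :
    φ.comp (ψ + ψ') = φ.comp ψ + φ.comp ψ' := by
  ext <;> simp [Preadditive.comp_add]

end Hom

/-- The subgroup of chain maps homotopic to zero. -/
def nullHomotopic (V W : Obj C) : AddSubgroup (Hom V W) where
  carrier := {χ | ∃ (s₁ : V.B ⟶ W.A) (s₀ : V.Z ⟶ W.B),
    χ.a = V.f ≫ s₁ ∧ χ.b = V.g ≫ s₀ + s₁ ≫ W.f ∧ χ.c = s₀ ≫ W.g}
  add_mem' := by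
    rintro χ χ' ⟨s₁, s₀, h1, h2, h3⟩ ⟨t₁, t₀, h1', h2', h3'⟩
    exact ⟨s₁ + t₁, s₀ + t₀, by
      simp [h1, h1', Preadditive.comp_add], by
      simp only [Hom.add_b, h2, h2', Preadditive.comp_add, Preadditive.add_comp]
      abel, by simp [h3, h3', Preadditive.add_comp]⟩
  zero_mem' := ⟨0, 0, by simp, by simp, by simp⟩
  neg_mem' := by
    rintro χ ⟨s₁, s₀, h1, h2, h3⟩
    exact ⟨-s₁, -s₀, by simp [h1], by simp [h2]; abel, by simp [h3]⟩

lemma comp_null {U V W : Obj C} (χ : Hom U V) (ψ : Hom V W)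
    (h : χ ∈ nullHomotopic U V) : χ.comp ψ ∈ nullHomotopic U W := by
  obtain ⟨s₁, s₀, h1, h2, h3⟩ := h
  refine ⟨s₁ ≫ ψ.a, s₀ ≫ ψ.b, ?_, ?_, ?_⟩
  · simp [h1]
  · simp only [Hom.comp_b, h2, Preadditive.add_comp, Category.assoc, ψ.comm₁]
  · simp only [Hom.comp_c, h3, Category.assoc, ψ.comm₂]

lemma null_comp {U V W : Obj C} (φ : Hom U V) (χ : Hom V W)
    (h : χ ∈ nullHomotopic V W) : φ.comp χ ∈ nullHomotopic U W := by
  obtain ⟨s₁, s₀, h1, h2, h3⟩ := h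
  refine ⟨φ.b ≫ s₁, φ.c ≫ s₀, ?_, ?_, ?_⟩
  · simp only [Hom.comp_a, h1, ← Category.assoc, φ.comm₁]
  · simp only [Hom.comp_b, h2, Preadditive.comp_add, ← Category.assoc, φ.comm₂]
  · simp [h3]

instance instCategory : Category (Obj C) where
  Hom V W := Hom V W ⧸ nullHomotopic V W
  id V := QuotientAddGroup.mk (Hom.id V)
  comp := Quotient.map₂ Hom.comp (by
    intro φ φ' hφ ψ ψ' hψ
    replace hφ := QuotientAddGroup.leftRel_apply.mp hφ
    replace hψ := QuotientAddGroup.leftRel_apply.mp hψ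
    refine QuotientAddGroup.leftRel_apply.mpr ?_
    have : -φ.comp ψ + φ'.comp ψ' = (-φ + φ').comp ψ' + φ.comp (-ψ + ψ') := by
      refine Hom.ext ?_ ?_ ?_ <;>
        simp [Hom.comp, Preadditive.add_comp, Preadditive.comp_add,
          Preadditive.neg_comp, Preadditive.comp_neg] <;> abel
    rw [this]
    exact AddSubgroup.add_mem _ (comp_null _ _ hφ) (null_comp _ _ hψ))
  id_comp := by
    rintro V W ⟨φ⟩
    exact congrArg (QuotientAddGroup.mk)
      (Hom.ext (by simp [Hom.comp, Hom.id]) (by simp [Hom.comp, Hom.id])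
        (by simp [Hom.comp, Hom.id]))
  comp_id := by
    rintro V W ⟨φ⟩
    exact congrArg (QuotientAddGroup.mk)
      (Hom.ext (by simp [Hom.comp, Hom.id]) (by simp [Hom.comp, Hom.id])
        (by simp [Hom.comp, Hom.id]))
  assoc := by
    rintro U V W X ⟨φ⟩ ⟨ψ⟩ ⟨ρ⟩
    exact congrArg (QuotientAddGroup.mk)
      (Hom.ext (by simp [Hom.comp]) (by simp [Hom.comp]) (by simp [Hom.comp]))

/-- The homotopy class of a chain map, as a morphism in the heart. -/
def mkHom {V W : Obj C} (φ : Hom V W) : V ⟶ W := QuotientAddGroup.mk φ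

lemma mkHom_surjective {V W : Obj C} : Function.Surjective (mkHom (V := V) (W := W)) :=
  fun q => Quotient.inductionOn q (fun φ => ⟨φ, rfl⟩)

@[simp] lemma mkHom_comp {U V W : Obj C} (φ : Hom U V) (ψ : Hom V W) :
    mkHom φ ≫ mkHom ψ = mkHom (φ.comp ψ) := rfl

instance homAddCommGroup (V W : Obj C) : AddCommGroup (V ⟶ W) :=
  inferInstanceAs (AddCommGroup (Hom V W ⧸ nullHomotopic V W))

lemma mkHom_add {V W : Obj C} (φ ψ : Hom V W) :
    (mkHom (φ + ψ) : V ⟶ W) = mkHom φ + mkHom ψ := rfl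

instance : Preadditive (Obj C) where
  homGroup := homAddCommGroup
  add_comp := by
    rintro U V W ⟨φ⟩ ⟨φ'⟩ ⟨ψ⟩
    show mkHom ((φ + φ').comp ψ) = mkHom ((φ.comp ψ) + (φ'.comp ψ))
    rw [Hom.add_comp]
  comp_add := by
    rintro U V W ⟨φ⟩ ⟨ψ⟩ ⟨ψ'⟩
    show mkHom (φ.comp (ψ + ψ')) = mkHom ((φ.comp ψ) + (φ.comp ψ'))
    rw [Hom.comp_add]

open ZeroObject in
/-- The object `P_X = [0 ⟶ 0 ⟶ X]`. -/
noncomputable def P (X : C) : Obj C where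
  A := 0
  B := 0
  Z := X
  f := 0
  g := 0
  w := by simp
  mono := by infer_instance
  exact := ShortComplex.exact_of_isZero_X₂ _ (isZero_zero C)

/-- The functor `P : C ⥤ 𝒜`, `X ↦ [0 ⟶ 0 ⟶ X]`. -/
noncomputable def Pfunctor : C ⥤ Obj C where
  obj := P
  map {X Y} u := mkHom ⟨0, 0, u, (isZero_zero C).eq_of_src _ _, (isZero_zero C).eq_of_src _ _⟩
  map_id X := congrArg QuotientAddGroup.mk
    (Hom.ext ((isZero_zero C).eq_of_src _ _) ((isZero_zero C).eq_of_src _ _) (by simp [Hom.id, P]))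
  map_comp {X Y Z} u v := congrArg QuotientAddGroup.mk
    (Hom.ext (by simp [Hom.comp]) (by simp [Hom.comp]) rfl)

/-- The heart object `[Ker g ⟶ B ⟶ Z]` associated to a morphism `g : B ⟶ Z`. -/
noncomputable def kernelObj {B Z : C} (g : B ⟶ Z) : Obj C where
  A := kernel g
  B := B
  Z := Z
  f := kernel.ι g
  g := g
  w := kernel.condition g
  mono := inferInstance
  exact := ShortComplex.exact_of_f_is_kernel _ (kernelIsKernel g)

section Stmt6Helpers

open ZeroObject

variable {C : Type*} [Category C] [Abelian C]

-- Basic quotient group facts about morphism equality in the heart.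
lemma mkHom_eq_zero_iff {V W : Obj C} (φ : Hom V W) :
    (mkHom φ : V ⟶ W) = 0 ↔ φ ∈ nullHomotopic V W :=
  QuotientAddGroup.eq_zero_iff φ

lemma mkHom_eq_iff {V W : Obj C} (φ ψ : Hom V W) :
    (mkHom φ : V ⟶ W) = mkHom ψ ↔ φ - ψ ∈ nullHomotopic V W :=
  QuotientAddGroup.eq_iff_sub_mem

@[simp] lemma P_f (X : C) : (P X).f = 0 := rfl
@[simp] lemma P_g (X : C) : (P X).g = 0 := rfl

lemma isZero_P_A (X : C) : IsZero ((P X).A) := isZero_zero C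
lemma isZero_P_B (X : C) : IsZero ((P X).B) := isZero_zero C

lemma isZero_P_zero : IsZero (P (0 : C)) := by
  rw [IsZero.iff_id_eq_zero]
  show (mkHom (Hom.id (P (0 : C))) : P (0:C) ⟶ P (0:C)) = 0
  rw [mkHom_eq_zero_iff]
  exact ⟨0, 0, (isZero_zero C).eq_of_src _ _, (isZero_zero C).eq_of_src _ _,
    (isZero_zero C).eq_of_src _ _⟩

lemma null_of_P_src {X : C} {U : Obj C} (φ : Hom (P X) U) (s₀ : X ⟶ U.B)
    (h : φ.c = s₀ ≫ U.g) : φ ∈ nullHomotopic (P X) U :=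
  ⟨0, s₀, (isZero_P_A X).eq_of_src _ _, (isZero_P_B X).eq_of_src _ _, h⟩

lemma null_of_P_src' {X : C} {U : Obj C} (φ : Hom (P X) U) (h : φ.c = 0) :
    φ ∈ nullHomotopic (P X) U :=
  null_of_P_src φ 0 (by rw [h, zero_comp]; rfl)

lemma c_eq_of_null_P_src {X : C} {U : Obj C} (φ : Hom (P X) U)
    (h : φ ∈ nullHomotopic (P X) U) : ∃ s₀ : X ⟶ U.B, φ.c = s₀ ≫ U.g := by
  obtain ⟨s₁, s₀, _, _, h3⟩ := h
  exact ⟨s₀, h3⟩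

lemma null_to_P_iff {U : Obj C} {X : C} (φ : Hom U (P X)) :
    φ ∈ nullHomotopic U (P X) ↔ φ.c = 0 := by
  constructor
  · rintro ⟨s₁, s₀, _, _, h3⟩
    rw [h3, P_g, comp_zero]
  · intro h
    exact ⟨0, 0, (isZero_P_A X).eq_of_tgt _ _, (isZero_P_B X).eq_of_tgt _ _,
      by rw [h, P_g, comp_zero]⟩

lemma Obj.exists_lift (W : Obj C) {T : C} (k : T ⟶ W.B) (hk : k ≫ W.g = 0) :
    ∃ l : T ⟶ W.A, l ≫ W.f = k := by
  haveI : Mono (ShortComplex.mk W.f W.g W.w).f := W.mono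
  exact W.exact.lift' k hk

/-- The object `Q = [0 ⟶ A ⟶ B]`. -/
@[reducible] noncomputable def QObj (V : Obj C) : Obj C where
  A := 0
  B := V.A
  Z := V.B
  f := 0
  g := V.f
  w := zero_comp
  mono := ⟨fun {T} a b _ => (isZero_zero C).eq_of_tgt a b⟩
  exact := (ShortComplex.exact_iff_mono _ rfl).2 V.mono

@[simp] lemma QObj_f (V : Obj C) : (QObj V).f = 0 := rfl
@[simp] lemma QObj_g (V : Obj C) : (QObj V).g = V.f := rfl

lemma isZero_QObj_A (V : Obj C) : IsZero ((QObj V).A) := isZero_zero C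

variable (V : Obj C)

/-- the chain map inducing `P V.A ⟶ P V.B` -/
noncomputable def ιH : Hom (P V.A) (P V.B) :=
  ⟨0, 0, V.f, (isZero_P_A V.A).eq_of_src _ _, (isZero_P_B V.A).eq_of_src _ _⟩

/-- the chain map inducing `P V.B ⟶ P V.Z` -/
noncomputable def γH : Hom (P V.B) (P V.Z) :=
  ⟨0, 0, V.g, (isZero_P_A V.B).eq_of_src _ _, (isZero_P_B V.B).eq_of_src _ _⟩

/-- the chain map inducing `P V.Z ⟶ V` -/
noncomputable def εH : Hom (P V.Z) V :=
  ⟨0, 0, 𝟙 V.Z, (isZero_P_A V.Z).eq_of_src _ _, (isZero_P_B V.Z).eq_of_src _ _⟩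

/-- the chain map inducing `P V.B ⟶ QObj V` -/
noncomputable def qH : Hom (P V.B) (QObj V) :=
  ⟨0, 0, 𝟙 V.B, (isZero_P_A V.B).eq_of_src _ _, (isZero_P_B V.B).eq_of_src _ _⟩

/-- the chain map inducing `QObj V ⟶ P V.Z` -/
noncomputable def g'H : Hom (QObj V) (P V.Z) :=
  ⟨0, 0, V.g, (isZero_P_B V.Z).eq_of_tgt _ _,
    by erw [QObj_g, V.w, P_g, comp_zero]; rfl⟩

@[simp] lemma ιH_c : (ιH V).c = V.f := rfl
@[simp] lemma γH_c : (γH V).c = V.g := rfl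
@[simp] lemma εH_c : (εH V).c = 𝟙 V.Z := rfl
@[simp] lemma εH_a : (εH V).a = 0 := rfl
@[simp] lemma εH_b : (εH V).b = 0 := rfl
@[simp] lemma qH_c : (qH V).c = 𝟙 V.B := rfl
@[simp] lemma g'H_c : (g'H V).c = V.g := rfl
@[simp] lemma g'H_a : (g'H V).a = 0 := rfl
@[simp] lemma g'H_b : (g'H V).b = 0 := rfl

lemma mk_ι_eq : Pfunctor.map V.f = mkHom (ιH V) := rfl
lemma mk_γ_eq : Pfunctor.map V.g = mkHom (γH V) := rfl

lemma w₁' : mkHom (ιH V) ≫ mkHom (γH V) = 0 := by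
  rw [mkHom_comp, mkHom_eq_zero_iff, null_to_P_iff]
  show V.f ≫ V.g = 0
  exact V.w

lemma w₂' : mkHom (γH V) ≫ mkHom (εH V) = 0 := by
  rw [mkHom_comp, mkHom_eq_zero_iff]
  exact null_of_P_src _ (𝟙 V.B) (by show V.g ≫ 𝟙 _ = 𝟙 _ ≫ V.g; simp)

lemma wq : mkHom (ιH V) ≫ mkHom (qH V) = 0 := by
  rw [mkHom_comp, mkHom_eq_zero_iff]
  exact null_of_P_src _ (𝟙 V.A) (by show V.f ≫ 𝟙 _ = 𝟙 _ ≫ (QObj V).g; simp)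

lemma hqg' : mkHom (qH V) ≫ mkHom (g'H V) = mkHom (γH V) := by
  rw [mkHom_comp, mkHom_eq_iff]
  refine (null_to_P_iff _).2 ?_
  show 𝟙 V.B ≫ V.g - V.g = 0
  simp

lemma wg'ε : mkHom (g'H V) ≫ mkHom (εH V) = 0 := by
  rw [mkHom_comp, mkHom_eq_zero_iff]
  refine ⟨-(𝟙 V.A), 𝟙 V.B, (isZero_QObj_A V).eq_of_src _ _, by simp, by simp; exact Category.comp_id V.g⟩

lemma mono_ι : Mono (mkHom (ιH V) : P V.A ⟶ P V.B) := by
  haveI : Mono V.f := V.mono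
  apply Preadditive.mono_of_cancel_zero
  intro U k hk
  obtain ⟨κ, rfl⟩ := mkHom_surjective k
  rw [mkHom_comp, mkHom_eq_zero_iff, null_to_P_iff] at hk
  rw [mkHom_eq_zero_iff, null_to_P_iff]
  have hk' : κ.c ≫ V.f = 0 := hk
  exact @zero_of_comp_mono _ _ _ _ _ _ _ V.f V.mono hk'

lemma epi_ε : Epi (mkHom (εH V) : P V.Z ⟶ V) := by
  haveI : Mono V.f := V.mono
  apply Preadditive.epi_of_cancel_zero
  intro T k hk
  obtain ⟨κ, rfl⟩ := mkHom_surjective k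
  rw [mkHom_comp, mkHom_eq_zero_iff] at hk
  obtain ⟨s₀, hc⟩ := c_eq_of_null_P_src _ hk
  replace hc : κ.c = s₀ ≫ T.g := by
    rw [← hc]; show κ.c = 𝟙 V.Z ≫ κ.c; simp
  haveI : Mono T.f := T.mono
  have hu : (κ.b - V.g ≫ s₀) ≫ T.g = 0 := by
    rw [Preadditive.sub_comp, Category.assoc, ← hc, ← κ.comm₂, sub_self]
  obtain ⟨s₁, hs₁⟩ := T.exists_lift _ hu
  rw [mkHom_eq_zero_iff]
  refine ⟨s₁, s₀, ?_, by rw [hs₁]; abel, hc⟩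
  rw [← cancel_mono T.f, ← κ.comm₁, Category.assoc, hs₁, Preadditive.comp_sub,
    ← Category.assoc, V.w, zero_comp, sub_zero]

lemma epi_q : Epi (mkHom (qH V) : P V.B ⟶ QObj V) := by
  haveI : Mono V.f := V.mono
  apply Preadditive.epi_of_cancel_zero
  intro T k hk
  obtain ⟨κ, rfl⟩ := mkHom_surjective k
  rw [mkHom_comp, mkHom_eq_zero_iff] at hk
  obtain ⟨s₀, hc⟩ := c_eq_of_null_P_src _ hk
  replace hc : κ.c = s₀ ≫ T.g := by
    rw [← hc]; show κ.c = 𝟙 V.B ≫ κ.c; simp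
  haveI : Mono T.f := T.mono
  have hu : (κ.b - (QObj V).g ≫ s₀) ≫ T.g = 0 := by
    rw [Preadditive.sub_comp, Category.assoc, ← hc, κ.comm₂, sub_self]
  obtain ⟨s₁, hs₁⟩ := T.exists_lift _ hu
  rw [mkHom_eq_zero_iff]
  exact ⟨s₁, s₀, (isZero_QObj_A V).eq_of_src _ _, by rw [hs₁]; abel, hc⟩

lemma mono_g' : Mono (mkHom (g'H V) : QObj V ⟶ P V.Z) := by
  haveI : Mono V.f := V.mono
  apply Preadditive.mono_of_cancel_zero
  intro U k hk
  obtain ⟨κ, rfl⟩ := mkHom_surjective k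
  rw [mkHom_comp, mkHom_eq_zero_iff, null_to_P_iff] at hk
  have hk' : κ.c ≫ V.g = 0 := hk
  obtain ⟨s₀, hs₀⟩ := V.exists_lift κ.c hk'
  rw [mkHom_eq_zero_iff]
  refine ⟨0, s₀, (isZero_zero C).eq_of_tgt _ _, ?_, hs₀.symm⟩
  have h2 : κ.b ≫ V.f = U.g ≫ κ.c := κ.comm₂.symm
  rw [zero_comp, add_zero, ← cancel_mono V.f, h2, Category.assoc, hs₀]

noncomputable def cokForkZero {D : Type*} [Category D] [HasZeroMorphisms D]
    {X Y Z : D} {f : X ⟶ Y} [Epi f] (hZ : IsZero Z) (w : f ≫ (0 : Y ⟶ Z) = 0) :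
    IsColimit (CokernelCofork.ofπ (0 : Y ⟶ Z) w) :=
  CokernelCofork.IsColimit.ofπ _ _ (fun g' _ => 0)
    (fun g' eq' => by rw [zero_comp]; exact (zero_of_epi_comp f eq').symm)
    (fun g' eq' m _ => hZ.eq_of_src _ _)

noncomputable def kerForkZero {D : Type*} [Category D] [HasZeroMorphisms D]
    {X Y Z : D} {f : X ⟶ Y} [Mono f] (hZ : IsZero Z) (w : (0 : Z ⟶ X) ≫ f = 0) :
    IsLimit (KernelFork.ofι (0 : Z ⟶ X) w) :=
  KernelFork.IsLimit.ofι _ _ (fun g' _ => 0)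
    (fun g' eq' => by rw [zero_comp]; exact (zero_of_comp_mono f eq').symm)
    (fun g' eq' m _ => hZ.eq_of_tgt _ _)

noncomputable def hi₁ (w : (mkHom (ιH V) : P V.A ⟶ P V.B) ≫ mkHom (γH V) = 0) :
    IsLimit (KernelFork.ofι (mkHom (ιH V)) w) := by
  haveI : Mono V.f := V.mono
  haveI := mono_ι V
  refine KernelFork.IsLimit.ofι' _ _ (fun {U} k hk => ?_)
  have hκ : mkHom (mkHom_surjective k).choose = k := (mkHom_surjective k).choose_spec
  set κ := (mkHom_surjective k).choose with hκdef
  rw [← hκ] at hk ⊢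
  rw [mkHom_comp, mkHom_eq_zero_iff, null_to_P_iff] at hk
  have hk' : κ.c ≫ V.g = 0 := hk
  have hUg : U.g ≫ κ.c = 0 := by rw [κ.comm₂, P_g, comp_zero]
  have hl := (V.exists_lift κ.c hk').choose_spec
  set l := (V.exists_lift κ.c hk').choose with hldef
  have hgl : U.g ≫ l = 0 := by
    erw [← cancel_mono V.f, Category.assoc, hl, hUg, zero_comp]; rfl
  refine ⟨mkHom ⟨0, 0, l, (isZero_P_B V.A).eq_of_tgt _ _, by rw [P_g, comp_zero]; exact hgl⟩, ?_⟩
  rw [mkHom_comp, mkHom_eq_iff]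
  refine (null_to_P_iff _).2 ?_
  show l ≫ (ιH V).c - κ.c = 0
  erw [ιH_c, hl, sub_self]

noncomputable def hp₁ (w : (mkHom (ιH V) : P V.A ⟶ P V.B) ≫ mkHom (qH V) = 0) :
    IsColimit (CokernelCofork.ofπ (mkHom (qH V)) w) := by
  haveI : Mono V.f := V.mono
  haveI := epi_q V
  refine CokernelCofork.IsColimit.ofπ' _ _ (fun {T} k hk => ?_)
  have hκ : mkHom (mkHom_surjective k).choose = k := (mkHom_surjective k).choose_spec
  set κ := (mkHom_surjective k).choose with hκdef
  rw [← hκ] at hk ⊢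
  rw [mkHom_comp, mkHom_eq_zero_iff] at hk
  have ht := (c_eq_of_null_P_src _ hk).choose_spec
  set t := (c_eq_of_null_P_src _ hk).choose with htdef
  have ht' : V.f ≫ κ.c = t ≫ T.g := ht
  refine ⟨mkHom ⟨0, t, κ.c, (isZero_QObj_A V).eq_of_src _ _, ht'⟩, ?_⟩
  rw [mkHom_comp, mkHom_eq_iff]
  refine null_of_P_src' _ ?_
  rw [Hom.sub_c, Hom.comp_c, qH_c]
  exact sub_eq_zero_of_eq (Category.id_comp κ.c)

noncomputable def hi₂ (w : (mkHom (g'H V) : QObj V ⟶ P V.Z) ≫ mkHom (εH V) = 0) :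
    IsLimit (KernelFork.ofι (mkHom (g'H V)) w) := by
  haveI : Mono V.f := V.mono
  haveI := mono_g' V
  refine KernelFork.IsLimit.ofι' _ _ (fun {U} k hk => ?_)
  have hκ : mkHom (mkHom_surjective k).choose = k := (mkHom_surjective k).choose_spec
  set κ := (mkHom_surjective k).choose with hκdef
  rw [← hκ] at hk ⊢
  rw [mkHom_comp, mkHom_eq_zero_iff] at hk
  set s₁ := hk.choose with hs₁def
  have hk2 := hk.choose_spec
  set s₀ := hk2.choose with hs₀def
  obtain ⟨h1, h2, h3⟩ := hk2.choose_spec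
  have h1' : U.f ≫ s₁ = 0 := by rw [← h1, Hom.comp_a, εH_a, comp_zero]
  have h2' : U.g ≫ s₀ + s₁ ≫ V.f = 0 := by rw [← h2, Hom.comp_b, εH_b, comp_zero]
  have h3' : κ.c = s₀ ≫ V.g := by
    rw [← h3, Hom.comp_c, εH_c]
    exact (Category.comp_id κ.c).symm
  refine ⟨mkHom ⟨0, -s₁, s₀, ?_, ?_⟩, ?_⟩
  · rw [Preadditive.comp_neg, h1', neg_zero, zero_comp]
  · show U.g ≫ s₀ = (-s₁) ≫ V.f
    rw [Preadditive.neg_comp]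
    exact eq_neg_of_add_eq_zero_left h2'
  · rw [mkHom_comp, mkHom_eq_iff]
    refine (null_to_P_iff _).2 ?_
    rw [Hom.sub_c, Hom.comp_c, g'H_c]
    exact sub_eq_zero_of_eq h3'.symm

noncomputable def hp₂ (w : (mkHom (γH V) : P V.B ⟶ P V.Z) ≫ mkHom (εH V) = 0) :
    IsColimit (CokernelCofork.ofπ (mkHom (εH V)) w) := by
  haveI : Mono V.f := V.mono
  haveI := epi_ε V
  refine CokernelCofork.IsColimit.ofπ' _ _ (fun {T} k hk => ?_)
  have hκ : mkHom (mkHom_surjective k).choose = k := (mkHom_surjective k).choose_spec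
  set κ := (mkHom_surjective k).choose with hκdef
  rw [← hκ] at hk ⊢
  rw [mkHom_comp, mkHom_eq_zero_iff] at hk
  have hs := (c_eq_of_null_P_src _ hk).choose_spec
  set s₀ := (c_eq_of_null_P_src _ hk).choose with hs₀def
  have hs' : V.g ≫ κ.c = s₀ ≫ T.g := hs
  have ha : (V.f ≫ s₀) ≫ T.g = 0 := by
    erw [Category.assoc, ← hs', ← Category.assoc, V.w, zero_comp]
  have ha' := (T.exists_lift _ ha).choose_spec
  set a := (T.exists_lift _ ha).choose with hadef
  refine ⟨mkHom ⟨a, s₀, κ.c, ha'.symm, hs'⟩, ?_⟩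
  rw [mkHom_comp, mkHom_eq_iff]
  refine null_of_P_src' _ ?_
  rw [Hom.sub_c, Hom.comp_c, εH_c]
  exact sub_eq_zero_of_eq (Category.id_comp κ.c)

end Stmt6Helpers

section Stmt6Exact

open ZeroObject

variable {C : Type*} [Category C] [Abelian C]

lemma epi_lift_of_fac {S : ShortComplex (Obj C)} {K : Obj C} {i : K ⟶ S.X₂} [Mono i]
    {wi : i ≫ S.g = 0} (hi : IsLimit (KernelFork.ofι i wi)) (e : S.X₁ ⟶ K) [Epi e]
    (he : e ≫ i = S.f) : Epi (hi.lift (KernelFork.ofι S.f S.zero)) := by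
  have h : hi.lift (KernelFork.ofι S.f S.zero) = e := by
    rw [← cancel_mono i, he]
    exact Fork.IsLimit.lift_ι hi
  rw [h]; infer_instance

lemma mono_desc_of_fac {S : ShortComplex (Obj C)} {Q : Obj C} {p : S.X₂ ⟶ Q} [Epi p]
    {wp : S.f ≫ p = 0} (hp : IsColimit (CokernelCofork.ofπ p wp)) (m : Q ⟶ S.X₃) [Mono m]
    (hm : p ≫ m = S.g) : Mono (hp.desc (CokernelCofork.ofπ S.g S.zero)) := by
  have h : hp.desc (CokernelCofork.ofπ S.g S.zero) = m := by
    rw [← cancel_epi p, hm]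
    exact Cofork.IsColimit.π_desc hp
  rw [h]; infer_instance

@[simps]
noncomputable def leftDataOfKernel {S : ShortComplex (Obj C)} (K : Obj C) (i : K ⟶ S.X₂)
    (wi : i ≫ S.g = 0) (hi : IsLimit (KernelFork.ofι i wi))
    (hepi : Epi (hi.lift (KernelFork.ofι S.f S.zero))) : S.LeftHomologyData where
  K := K
  H := P (0 : C)
  i := i
  π := 0
  wi := wi
  hi := hi
  wπ := comp_zero
  hπ := by haveI := hepi; exact cokForkZero isZero_P_zero _

@[simps]
noncomputable def rightDataOfCokernel {S : ShortComplex (Obj C)} (Q : Obj C) (p : S.X₂ ⟶ Q)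
    (wp : S.f ≫ p = 0) (hp : IsColimit (CokernelCofork.ofπ p wp))
    (hmono : Mono (hp.desc (CokernelCofork.ofπ S.g S.zero))) : S.RightHomologyData where
  Q := Q
  H := P (0 : C)
  p := p
  ι := 0
  wp := wp
  hp := hp
  wι := zero_comp
  hι := by haveI := hmono; exact kerForkZero isZero_P_zero _

variable (V : Obj C)

lemma exact₁ (w : Pfunctor.map V.f ≫ Pfunctor.map V.g = 0) :
    (ShortComplex.mk (Pfunctor.map V.f) (Pfunctor.map V.g) w).Exact := by
  haveI := mono_ι V
  haveI := epi_q V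
  haveI := mono_g' V
  have w' : (mkHom (ιH V) : P V.A ⟶ P V.B) ≫ mkHom (γH V) = 0 := w
  have wqq : (mkHom (ιH V) : P V.A ⟶ P V.B) ≫ mkHom (qH V) = 0 := wq V
  refine ⟨⟨⟨leftDataOfKernel (P V.A) (mkHom (ιH V)) w' (hi₁ V w')
      (epi_lift_of_fac (S := ShortComplex.mk (mkHom (ιH V) : P V.A ⟶ P V.B) (mkHom (γH V)) w') _ (𝟙 _) (Category.id_comp (mkHom (ιH V)))),
    rightDataOfCokernel (QObj V) (mkHom (qH V)) wqq (hp₁ V wqq)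
      (mono_desc_of_fac (S := ShortComplex.mk (mkHom (ιH V) : P V.A ⟶ P V.B) (mkHom (γH V)) w') _ (mkHom (g'H V)) (hqg' V)),
    Iso.refl _, ?_⟩, isZero_P_zero⟩⟩
  exact zero_comp.trans (wq V).symm

lemma exact₂ (w : Pfunctor.map V.g ≫ (mkHom (εH V) : P V.Z ⟶ V) = 0) :
    (ShortComplex.mk (Pfunctor.map V.g) (mkHom (εH V)) w).Exact := by
  haveI := mono_g' V
  haveI := epi_q V
  haveI := epi_ε V
  have w' : (mkHom (g'H V) : QObj V ⟶ P V.Z) ≫ mkHom (εH V) = 0 := wg'ε V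
  have w'' : (mkHom (γH V) : P V.B ⟶ P V.Z) ≫ mkHom (εH V) = 0 := w
  refine ⟨⟨⟨leftDataOfKernel (QObj V) (mkHom (g'H V)) w' (hi₂ V w')
      (epi_lift_of_fac (S := ShortComplex.mk (mkHom (γH V) : P V.B ⟶ P V.Z) (mkHom (εH V)) w'') _ (mkHom (qH V)) (hqg' V)),
    rightDataOfCokernel V (mkHom (εH V)) w'' (hp₂ V w'')
      (mono_desc_of_fac (S := ShortComplex.mk (mkHom (γH V) : P V.B ⟶ P V.Z) (mkHom (εH V)) w'') _ (𝟙 V) (Category.comp_id (mkHom (εH V)))),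
    Iso.refl _, ?_⟩, isZero_P_zero⟩⟩
  exact zero_comp.trans (wg'ε V).symm

end Stmt6Exact

section Stmt6Proj

open ZeroObject

variable {C : Type*} [Category C] [Abelian C]

lemma projective_P (X : C) : Projective (P X) := by
  refine ⟨@fun Y Z φ e he => ?_⟩
  obtain ⟨eh, rfl⟩ := mkHom_surjective e
  obtain ⟨ph, rfl⟩ := mkHom_surjective φ
  set v : Y.Z ⊞ Z.B ⟶ Z.Z := biprod.desc eh.c Z.g with hv
  have hwf : (Z.f ≫ biprod.inr) ≫ v = 0 := by
    rw [hv, Category.assoc, biprod.inr_desc, Z.w]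
  have hs₁w : ((eh.b ≫ biprod.inr : Y.B ⟶ Y.Z ⊞ Z.B) - Y.g ≫ biprod.inl) ≫ v = 0 := by
    rw [hv, Preadditive.sub_comp, Category.assoc, Category.assoc, biprod.inr_desc,
      biprod.inl_desc, eh.comm₂, sub_self]
  have pf1 : Z.f ≫ biprod.inr = kernel.lift v (Z.f ≫ biprod.inr) hwf ≫ (kernelObj v).f :=
    (kernel.lift_ι v _ hwf).symm
  have pf2 : Z.g ≫ 𝟙 Z.Z = biprod.inr ≫ (kernelObj v).g := by
    rw [Category.comp_id]; exact (biprod.inr_desc _ _).symm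
  have h0 : mkHom eh ≫
      (mkHom ⟨kernel.lift v (Z.f ≫ biprod.inr) hwf, biprod.inr, 𝟙 Z.Z, pf1, pf2⟩ :
        Z ⟶ kernelObj v) = 0 := by
    rw [mkHom_comp, mkHom_eq_zero_iff]
    refine ⟨kernel.lift v (eh.b ≫ biprod.inr - Y.g ≫ biprod.inl) hs₁w, biprod.inl, ?_, ?_, ?_⟩
    · refine (cancel_mono (kernel.ι v)).1 ?_; rw [Hom.comp_a]
      dsimp only
      change (eh.a ≫ kernel.lift v (Z.f ≫ biprod.inr) hwf) ≫ kernel.ι v = (Y.f ≫ kernel.lift v (eh.b ≫ biprod.inr - Y.g ≫ biprod.inl) hs₁w) ≫ kernel.ι v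
      rw [Category.assoc, Category.assoc, kernel.lift_ι, kernel.lift_ι,
        Preadditive.comp_sub, ← Category.assoc, ← Category.assoc, eh.comm₁,
        ← Category.assoc, Y.w, zero_comp, sub_zero]
    · rw [Hom.comp_b]
      dsimp only
      have hl2 : kernel.lift v (eh.b ≫ biprod.inr - Y.g ≫ biprod.inl) hs₁w ≫ kernel.ι v
          = eh.b ≫ biprod.inr - Y.g ≫ biprod.inl := kernel.lift_ι _ _ _
      have : eh.b ≫ biprod.inr = Y.g ≫ biprod.inl +
          kernel.lift v (eh.b ≫ biprod.inr - Y.g ≫ biprod.inl) hs₁w ≫ kernel.ι v := by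
        rw [hl2]; abel
      exact this
    · rw [Hom.comp_c]
      dsimp only
      erw [Category.comp_id]
      exact (biprod.inl_desc _ _).symm
  have hzero : (mkHom ⟨kernel.lift v (Z.f ≫ biprod.inr) hwf, biprod.inr, 𝟙 Z.Z, pf1, pf2⟩ :
      Z ⟶ kernelObj v) = 0 :=
    (cancel_epi (mkHom eh)).1 (by rw [h0, comp_zero])
  rw [mkHom_eq_zero_iff] at hzero
  obtain ⟨σ₁, σ₀, _, _, h3⟩ := hzero
  have h3' : 𝟙 Z.Z = σ₀ ≫ v := h3
  have key : (biprod.fst ≫ eh.c + biprod.snd ≫ Z.g : Y.Z ⊞ Z.B ⟶ Z.Z) = v := by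
    rw [hv]
    apply biprod.hom_ext' <;>
      simp [Preadditive.comp_add]
  have main : (ph.c ≫ σ₀ ≫ biprod.fst) ≫ eh.c + (ph.c ≫ σ₀ ≫ biprod.snd) ≫ Z.g = ph.c := by
    have : (ph.c ≫ σ₀ ≫ biprod.fst) ≫ eh.c + (ph.c ≫ σ₀ ≫ biprod.snd) ≫ Z.g
        = ph.c ≫ σ₀ ≫ (biprod.fst ≫ eh.c + biprod.snd ≫ Z.g) := by
      simp only [Preadditive.comp_add, Category.assoc]; erw [Category.assoc, Category.assoc, Preadditive.comp_add, Preadditive.comp_add]; rfl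
    erw [this, key, ← h3', Category.comp_id]
  refine ⟨mkHom ⟨0, 0, ph.c ≫ σ₀ ≫ biprod.fst,
    (isZero_P_A X).eq_of_src _ _, (isZero_P_B X).eq_of_src _ _⟩, ?_⟩
  rw [mkHom_comp, mkHom_eq_iff]
  refine null_of_P_src _ (-(ph.c ≫ σ₀ ≫ biprod.snd)) ?_
  rw [Hom.sub_c, Hom.comp_c]
  dsimp only
  erw [Preadditive.neg_comp]
  calc (ph.c ≫ σ₀ ≫ biprod.fst) ≫ eh.c - ph.c
      = (ph.c ≫ σ₀ ≫ biprod.fst) ≫ eh.c -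
        ((ph.c ≫ σ₀ ≫ biprod.fst) ≫ eh.c + (ph.c ≫ σ₀ ≫ biprod.snd) ≫ Z.g) := by rw [main]
    _ = -((ph.c ≫ σ₀ ≫ biprod.snd) ≫ Z.g) := by abel

end Stmt6Proj


end ARHeart

open CategoryTheory Limits ARHeart in
/-- for every object `V = [A ⟶ B ⟶ C]` of the heart `𝒜` there is an exact
sequence `0 ⟶ P_A ⟶ P_B ⟶ P_C ⟶ V ⟶ 0` in `𝒜`, where the `P`'s are projective
(so every object of `𝒜` has projective dimension at most `2`). -/
theorem stmt6 {C : Type*} [Category C] [Abelian C] (V : ARHeart.Obj C) :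
    ∃ (w₁ : (ARHeart.Pfunctor.map V.f) ≫ (ARHeart.Pfunctor.map V.g) = 0)
      (w₂ : (ARHeart.Pfunctor.map V.g) ≫
          (ARHeart.mkHom ⟨0, 0, 𝟙 V.Z, (isZero_zero C).eq_of_src _ _, (isZero_zero C).eq_of_src _ _⟩ :
            ARHeart.P V.Z ⟶ V) = 0),
      Mono (ARHeart.Pfunctor.map V.f) ∧
      (ShortComplex.mk _ _ w₁).Exact ∧
      (ShortComplex.mk _ _ w₂).Exact ∧
      Epi (ARHeart.mkHom ⟨0, 0, 𝟙 V.Z, (isZero_zero C).eq_of_src _ _, (isZero_zero C).eq_of_src _ _⟩ :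
            ARHeart.P V.Z ⟶ V) ∧
      Projective (ARHeart.P V.A) ∧ Projective (ARHeart.P V.B) ∧
      Projective (ARHeart.P V.Z) := by
  refine ⟨ARHeart.w₁' V, ARHeart.w₂' V, ARHeart.mono_ι V, ARHeart.exact₁ V (ARHeart.w₁' V),
    ARHeart.exact₂ V (ARHeart.w₂' V), ARHeart.epi_ε V, ARHeart.projective_P V.A,
    ARHeart.projective_P V.B, ARHeart.projective_P V.Z⟩
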